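/- arXiv:1007.4651 — 3 statements merged into one kernel-verified Lean document; each statement's English description precedes it below -/
import Mathlib

section
/- For α > 1/2 there exists a constant K such that for all real r ≥ 1 and all natural numbers n ≥ 0, −(r log r)/2 + r log(n+1) − α n² ≤ K. Consequently, if β > α, then Σ_{n=0}^∞ (n+1)^r e^{−β n²} ≤ C r^{r/2} for some constant C independent of r ≥ 1. -/
/-!
Applying `log y ≤ y - 1` to `y = (n + 1)² / r` gives `r log (n + 1) ≤ (r log r) / 2 + ((n + 1)² - r) / 2`,
so for `r ≥ 1` the function is at most `n - (α - 1/2) n²`, a downward parabola bounded by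
`1 / (4 (α - 1/2))`. Exponentiating, the `n`-th term of the series is at most
`e^K r^{r/2} e^{-(β - α) n²}`, and the Gaussian series `∑ e^{-(β - α) n²}` converges.
-/

open Real

lemma mul_log_le_mul_log_div_two_add {r x : ℝ} (hr : 0 < r) (hx : 0 < x) :
    r * log x ≤ r * log r / 2 + (x ^ 2 - r) / 2 := by
  have h := log_le_sub_one_of_pos (div_pos (pow_pos hx 2) hr)
  rw [log_div (by positivity) hr.ne', log_pow, le_sub_iff_add_le, le_div_iff₀ hr] at h
  push_cast at h
  nlinarith

lemma sub_mul_sq_le_inv_four_mul {c : ℝ} (hc : 0 < c) (t : ℝ) :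
    t - c * t ^ 2 ≤ 1 / (4 * c) := by
  rw [le_div_iff₀ (by positivity)]
  nlinarith [sq_nonneg (2 * c * t - 1)]

lemma neg_mul_log_div_two_add_mul_log_sub_le {α r x : ℝ} (hα : 1 / 2 < α) (hr : 1 ≤ r)
    (hx : 0 ≤ x) :
    -(r * log r) / 2 + r * log (x + 1) - α * x ^ 2 ≤ 1 / (4 * (α - 1 / 2)) := by
  have hlog := mul_log_le_mul_log_div_two_add (by linarith : 0 < r) (by linarith : 0 < x + 1)
  have hparabola := sub_mul_sq_le_inv_four_mul (by linarith : 0 < α - 1 / 2) x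
  nlinarith

lemma summable_exp_neg_mul_nat_sq {d : ℝ} (hd : 0 < d) :
    Summable fun n : ℕ ↦ exp (-d * (n : ℝ) ^ 2) :=
  summable_exp_nat_mul_of_ge (neg_lt_zero.mpr hd) fun n ↦ by
    exact_mod_cast Nat.le_self_pow two_ne_zero n

lemma rpow_mul_exp_le {α β r x t K : ℝ} (hr : 0 < r) (hx : 0 < x)
    (hK : -(r * log r) / 2 + r * log x - α * t ≤ K) :
    x ^ r * exp (-β * t) ≤ exp K * r ^ (r / 2) * exp (-(β - α) * t) := by
  rw [rpow_def_of_pos hx, rpow_def_of_pos hr, ← exp_add, ← exp_add, ← exp_add, exp_le_exp]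
  linarith

theorem f_bounded_and_series_bound (α β : ℝ) (hα : 1 / 2 < α) (hβ : α < β) :
    (∃ K : ℝ, ∀ r : ℝ, 1 ≤ r → ∀ n : ℕ,
      -(r * Real.log r) / 2 + r * Real.log ((n : ℝ) + 1) - α * (n : ℝ) ^ 2 ≤ K) ∧
    (∃ C : ℝ, 0 < C ∧ ∀ r : ℝ, 1 ≤ r →
      (∑' n : ℕ, ((n : ℝ) + 1) ^ r * Real.exp (-β * (n : ℝ) ^ 2)) ≤ C * r ^ (r / 2)) := by
  set K := 1 / (4 * (α - 1 / 2))
  have hf : ∀ r : ℝ, 1 ≤ r → ∀ n : ℕ,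
      -(r * log r) / 2 + r * log ((n : ℝ) + 1) - α * (n : ℝ) ^ 2 ≤ K :=
    fun r hr n ↦ neg_mul_log_div_two_add_mul_log_sub_le hα hr n.cast_nonneg
  refine ⟨⟨K, hf⟩, exp K * ∑' n : ℕ, exp (-(β - α) * (n : ℝ) ^ 2), ?_, fun r hr ↦ ?_⟩
  · have hsum := summable_exp_neg_mul_nat_sq (sub_pos.mpr hβ)
    exact mul_pos (exp_pos K) (hsum.tsum_pos (fun _ ↦ (exp_pos _).le) 0 (exp_pos _))
  have hdom : Summable fun n : ℕ ↦ exp K * r ^ (r / 2) * exp (-(β - α) * (n : ℝ) ^ 2) :=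
    (summable_exp_neg_mul_nat_sq (sub_pos.mpr hβ)).mul_left _
  have hterm := fun n : ℕ ↦
    rpow_mul_exp_le (β := β) (by linarith) (by positivity) (hf r hr n)
  calc ∑' n : ℕ, ((n : ℝ) + 1) ^ r * exp (-β * (n : ℝ) ^ 2)
      ≤ ∑' n : ℕ, exp K * r ^ (r / 2) * exp (-(β - α) * (n : ℝ) ^ 2) :=
        (hdom.of_nonneg_of_le (fun _ ↦ by positivity) hterm).tsum_le_tsum hterm hdom
    _ = exp K * (∑' n : ℕ, exp (-(β - α) * (n : ℝ) ^ 2)) * r ^ (r / 2) := by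
        rw [tsum_mul_left]; ring
end

section
/- Neo-classical (binomial) inequality: for every real p ≥ 1, all reals a, b ≥ 0, and every natural number k ≥ 1, Σ_{j=0}^{k} a^{j/p} b^{(k−j)/p} / (Γ(j/p + 1) Γ((k−j)/p + 1)) ≤ p² (a+b)^{k/p} / Γ(k/p + 1). -/
/-!
Write `α = 1/p ∈ (0, 1]` and `φ_ν(x) = x^ν / Γ(ν + 1)`, so that the sum is
`S_k(a, b) = ∑ φ_{jα}(a) φ_{(k-j)α}(b)`. The Beta integral says that the Riemann–Liouville
integral `I^α` maps `φ_ν` to `φ_{ν+α}`, hence, in the variable `b`,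
`S_{k+1}(a, ·) = φ_{(k+1)α}(a) + I^α S_k(a, ·)`.
One proves by induction on `k ≥ 1` the sharper bound
`α² S_k(a, b) + (2^(α-1) - α²)(φ_{kα}(a) + φ_{kα}(b)) ≤ φ_{kα}(a + b)`.
The case `k = 1` is the power-mean inequality `2^(α-1)(a^α + b^α) ≤ (a + b)^α`. For the step,
apply `I^α` to the induction hypothesis; the only term that is not a monomial,
`I^α φ_s(a + ·)` with `s = kα`, is an integral of `φ_s` against the kernel `(a + b - z)^(α-1)`.
Comparing that kernel on `[0, a]` with `2^(α-1)(a - z)^(α-1)` costs an error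
`(1 - 2^(α-1)) φ_s(a) φ_α(b)`, which is absorbed thanks to `1 + α² ≤ 2^α`.
-/

open Real Finset MeasureTheory intervalIntegral Set

namespace NeoClassical

lemma one_add_sq_le_two_rpow {α : ℝ} (h0 : 0 ≤ α) (h1 : α ≤ 1) : 1 + α ^ 2 ≤ (2 : ℝ) ^ α := by
  have hbernoulli : (2 : ℝ) ^ (1 - α) ≤ 2 - α := by
    have := rpow_one_add_le_one_add_mul_self (s := 1) (by norm_num) (sub_nonneg.2 h1)
      (by linarith : 1 - α ≤ 1)
    norm_num at this ⊢
    linarith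
  have hsplit : (2 : ℝ) ^ α * 2 ^ (1 - α) = 2 := by
    rw [← rpow_add two_pos]; norm_num
  nlinarith [rpow_pos_of_pos two_pos α, mul_nonneg h0 (sq_nonneg (1 - α))]

lemma sq_le_two_rpow_sub_one {α : ℝ} (h0 : 0 ≤ α) (h1 : α ≤ 1) : α ^ 2 ≤ (2 : ℝ) ^ (α - 1) := by
  rw [rpow_sub two_pos, rpow_one]
  nlinarith [one_add_sq_le_two_rpow h0 h1]

lemma two_rpow_sub_one_mul_add_le {α a b : ℝ} (h0 : 0 ≤ α) (h1 : α ≤ 1) (ha : 0 ≤ a)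
    (hb : 0 ≤ b) : (2 : ℝ) ^ (α - 1) * (a ^ α + b ^ α) ≤ (a + b) ^ α := by
  have hmid := (concaveOn_rpow h0 h1).2 (mem_Ici.2 ha) (mem_Ici.2 hb)
    (by norm_num : (0 : ℝ) ≤ 1 / 2) (by norm_num : (0 : ℝ) ≤ 1 / 2) (by norm_num)
  simp only [smul_eq_mul] at hmid
  rw [show 1 / 2 * a + 1 / 2 * b = (a + b) / 2 by ring, div_rpow (by linarith) two_pos.le,
    le_div_iff₀ (rpow_pos_of_pos two_pos α)] at hmid
  rw [rpow_sub two_pos, rpow_one]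
  linarith

lemma integral_rpow_mul_sub_rpow {u v b : ℝ} (hu : 0 < u) (hv : 0 < v) (hb : 0 < b) :
    ∫ y in 0..b, y ^ (u - 1) * (b - y) ^ (v - 1) =
      Gamma u * Gamma v / Gamma (u + v) * b ^ (u + v - 1) := by
  apply Complex.ofReal_injective
  have hcpow : EqOn (fun y : ℝ => ((y ^ (u - 1) * (b - y) ^ (v - 1) : ℝ) : ℂ))
      (fun y : ℝ => (y : ℂ) ^ ((u : ℂ) - 1) * ((b : ℂ) - y) ^ ((v : ℂ) - 1)) (uIcc 0 b) := by
    intro y hy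
    rw [uIcc_of_le hb.le] at hy
    simp only [Complex.ofReal_mul, Complex.ofReal_cpow hy.1,
      Complex.ofReal_cpow (sub_nonneg.2 hy.2), Complex.ofReal_sub, Complex.ofReal_one]
  rw [← intervalIntegral.integral_ofReal, integral_congr hcpow, Complex.betaIntegral_scaled _ _ hb,
    Complex.betaIntegral_eq_Gamma_mul_div _ _ (by simpa) (by simpa)]
  push_cast
  rw [Complex.ofReal_cpow hb.le, ← Complex.ofReal_add, Complex.Gamma_ofReal, Complex.Gamma_ofReal,
    Complex.Gamma_ofReal]
  push_cast
  ring

noncomputable def powDivGamma (ν x : ℝ) : ℝ := x ^ ν / Gamma (ν + 1)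

lemma powDivGamma_zero_left (x : ℝ) : powDivGamma 0 x = 1 := by
  simp [powDivGamma]

lemma powDivGamma_nonneg {ν x : ℝ} (hν : 0 ≤ ν) (hx : 0 ≤ x) : 0 ≤ powDivGamma ν x :=
  div_nonneg (rpow_nonneg hx ν) (Gamma_pos_of_pos (by linarith)).le

lemma continuous_powDivGamma {ν : ℝ} (hν : 0 ≤ ν) : Continuous (powDivGamma ν) :=
  (continuous_id.rpow_const fun _ => Or.inr hν).div_const _

lemma powDivGamma_le_powDivGamma {ν x y : ℝ} (hν : 0 ≤ ν) (hx : 0 ≤ x) (hxy : x ≤ y) :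
    powDivGamma ν x ≤ powDivGamma ν y :=
  div_le_div_of_nonneg_right (rpow_le_rpow hx hxy hν) (Gamma_pos_of_pos (by linarith)).le

lemma intervalIntegrable_rpow_sub_mul {α c a b : ℝ} {f : ℝ → ℝ} (hα : 0 < α)
    (hf : ContinuousOn f (uIcc a b)) :
    IntervalIntegrable (fun y => (c - y) ^ (α - 1) * f y) volume a b := by
  have hkernel := (intervalIntegrable_rpow' (r := α - 1) (a := c - a) (b := c - b)
    (by linarith)).comp_sub_left c
  simp only [sub_sub_cancel] at hkernel
  exact hkernel.mul_continuousOn hf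

lemma integral_rpow_sub_mul_powDivGamma {α ν b : ℝ} (hα : 0 < α) (hν : 0 ≤ ν) (hb : 0 ≤ b) :
    ∫ y in 0..b, (b - y) ^ (α - 1) * powDivGamma ν y = Gamma α * powDivGamma (ν + α) b := by
  rcases hb.eq_or_lt with rfl | hb
  · simp [powDivGamma, zero_rpow (by positivity : ν + α ≠ 0)]
  have hbeta := integral_rpow_mul_sub_rpow (u := ν + 1) (by linarith) hα hb
  have hΓν := (Gamma_pos_of_pos (by linarith : 0 < ν + 1)).ne'
  simp only [powDivGamma, mul_div_assoc', intervalIntegral.integral_div]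
  rw [add_sub_cancel_right] at hbeta
  rw [integral_congr fun y _ => mul_comm _ _, hbeta,
    show ν + 1 + α - 1 = ν + α by ring, show ν + 1 + α = ν + α + 1 by ring]
  field_simp

noncomputable def kernelExcess (α b u : ℝ) : ℝ := max ((2 * u) ^ (α - 1) - (u + b) ^ (α - 1)) 0

section kernelExcess

variable {α b : ℝ}

lemma intervalIntegrable_kernelExcess (hα : 0 < α) (t : ℝ) :
    IntervalIntegrable (kernelExcess α b) volume 0 t := by
  have hrpow (c d : ℝ) : IntervalIntegrable (fun x : ℝ => x ^ (α - 1)) volume c d :=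
    intervalIntegrable_rpow' (by linarith)
  have hdiff : IntervalIntegrable (fun u => (2 * u) ^ (α - 1) - (u + b) ^ (α - 1)) volume 0 t :=
    (by simpa using (hrpow 0 (2 * t)).comp_mul_left (c := 2) :
      IntervalIntegrable (fun u : ℝ => (2 * u) ^ (α - 1)) volume 0 t).sub
    (by simpa using (hrpow b (t + b)).comp_add_right b)
  exact ⟨hdiff.1.pos_part, hdiff.2.pos_part⟩

lemma integral_two_mul_rpow_sub_add_rpow (hα : 0 < α) (hb : 0 ≤ b) :
    ∫ u in 0..b, ((2 * u) ^ (α - 1) - (u + b) ^ (α - 1)) = (1 - 2 ^ (α - 1)) * b ^ α / α := by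
  have hrpow (c d : ℝ) : IntervalIntegrable (fun x : ℝ => x ^ (α - 1)) volume c d :=
    intervalIntegrable_rpow' (by linarith)
  rw [integral_sub (by simpa using (hrpow 0 (2 * b)).comp_mul_left (c := 2))
      (by simpa using (hrpow b (b + b)).comp_add_right b),
    integral_comp_mul_left (fun x : ℝ => x ^ (α - 1)) two_ne_zero,
    integral_comp_add_right (fun x : ℝ => x ^ (α - 1)), integral_rpow (Or.inl (by linarith)),
    integral_rpow (Or.inl (by linarith))]
  simp only [sub_add_cancel, mul_zero, zero_add, zero_rpow hα.ne', sub_zero, smul_eq_mul,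
    ← two_mul, mul_rpow two_pos.le hb, rpow_sub two_pos, rpow_one]
  field_simp
  ring

lemma integral_kernelExcess_le {a : ℝ} (hα0 : 0 < α) (hα1 : α ≤ 1) (ha : 0 ≤ a) (hb : 0 ≤ b) :
    ∫ u in 0..a, kernelExcess α b u ≤ (1 - 2 ^ (α - 1)) * b ^ α / α := by
  -- `2u ≤ u + b` exactly when `u ≤ b`, and `x ↦ x ^ (α - 1)` is antitone on `(0, ∞)`
  have hgb : ∫ u in 0..b, kernelExcess α b u = (1 - 2 ^ (α - 1)) * b ^ α / α := by
    rw [← integral_two_mul_rpow_sub_add_rpow hα0 hb, integral_of_le hb, integral_of_le hb]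
    refine setIntegral_congr_fun measurableSet_Ioc fun u hu => max_eq_left ?_
    exact sub_nonneg.2 (rpow_le_rpow_of_nonpos (by linarith [hu.1]) (by linarith [hu.2])
      (by linarith))
  rcases le_total a b with hab | hba
  · exact hgb ▸ integral_mono_interval le_rfl ha hab
      (Filter.Eventually.of_forall fun u => le_max_right _ _)
      (intervalIntegrable_kernelExcess hα0 b)
  · have hvanish : ∫ u in b..a, kernelExcess α b u = 0 := by
      rw [integral_of_le hba]
      refine setIntegral_eq_zero_of_forall_eq_zero fun u hu => max_eq_right ?_
      exact sub_nonpos.2 (rpow_le_rpow_of_nonpos (by linarith [hu.1]) (by linarith [hu.1])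
        (by linarith))
    have hint (t : ℝ) := intervalIntegrable_kernelExcess (b := b) hα0 t
    rw [← integral_add_adjacent_intervals (hint b) ((hint b).symm.trans (hint a)), hvanish,
      add_zero, hgb]

lemma two_rpow_sub_one_mul_integral_le {a : ℝ} {f : ℝ → ℝ} (hα0 : 0 < α) (hα1 : α ≤ 1)
    (ha : 0 ≤ a) (hb : 0 ≤ b) (hf : ContinuousOn f (Icc 0 a))
    (hf0 : ∀ z ∈ Icc 0 a, 0 ≤ f z) (hfa : ∀ z ∈ Icc 0 a, f z ≤ f a) :
    2 ^ (α - 1) * ∫ z in 0..a, (a - z) ^ (α - 1) * f z ≤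
      (∫ z in 0..a, (a + b - z) ^ (α - 1) * f z) + (1 - 2 ^ (α - 1)) * b ^ α / α * f a := by
  rw [← uIcc_of_le ha] at hf
  have hweight := intervalIntegrable_rpow_sub_mul (c := a + b) hα0 hf
  have hexcess : IntervalIntegrable (fun z => kernelExcess α b (a - z)) volume 0 a := by
    simpa using ((intervalIntegrable_kernelExcess hα0 a).symm.comp_sub_left a)
  have hpointwise : ∀ z ∈ Icc 0 a, 2 ^ (α - 1) * ((a - z) ^ (α - 1) * f z) ≤
      (a + b - z) ^ (α - 1) * f z + f a * kernelExcess α b (a - z) := by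
    intro z hz
    have hD := calc
      ((2 * (a - z)) ^ (α - 1) - (a - z + b) ^ (α - 1)) * f z ≤ kernelExcess α b (a - z) * f z :=
        mul_le_mul_of_nonneg_right (le_max_left _ _) (hf0 z hz)
      _ ≤ kernelExcess α b (a - z) * f a := mul_le_mul_of_nonneg_left (hfa z hz) (le_max_right _ _)
    rw [mul_rpow two_pos.le (by linarith [hz.2]), show a - z + b = a + b - z by ring] at hD
    linarith
  have hmono := integral_mono_on ha ((intervalIntegrable_rpow_sub_mul hα0 hf).const_mul _)
    (hweight.add (hexcess.const_mul _)) hpointwise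
  rw [intervalIntegral.integral_const_mul, integral_add hweight (hexcess.const_mul _),
    intervalIntegral.integral_const_mul, integral_comp_sub_left (kernelExcess α b) a, sub_self,
    sub_zero] at hmono
  have hexcess_le := mul_le_mul_of_nonneg_left (integral_kernelExcess_le hα0 hα1 ha hb)
    (hf0 a ⟨ha, le_rfl⟩)
  linarith

end kernelExcess

noncomputable def riemannLiouville (α : ℝ) (f : ℝ → ℝ) (b : ℝ) : ℝ :=
  (Gamma α)⁻¹ * ∫ y in 0..b, (b - y) ^ (α - 1) * f y

section riemannLiouville

variable {α b : ℝ} {f g : ℝ → ℝ}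

lemma riemannLiouville_const_mul (c : ℝ) :
    riemannLiouville α (fun y => c * f y) b = c * riemannLiouville α f b := by
  simp only [riemannLiouville, mul_left_comm _ c, intervalIntegral.integral_const_mul]

lemma riemannLiouville_sub (hα : 0 < α) (hf : ContinuousOn f (uIcc 0 b))
    (hg : ContinuousOn g (uIcc 0 b)) :
    riemannLiouville α (fun y => f y - g y) b =
      riemannLiouville α f b - riemannLiouville α g b := by
  simp only [riemannLiouville, mul_sub,
    integral_sub (intervalIntegrable_rpow_sub_mul hα hf) (intervalIntegrable_rpow_sub_mul hα hg)]

lemma riemannLiouville_sum {ι : Type*} (s : Finset ι) {F : ι → ℝ → ℝ} (hα : 0 < α)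
    (hF : ∀ i ∈ s, ContinuousOn (F i) (uIcc 0 b)) :
    riemannLiouville α (fun y => ∑ i ∈ s, F i y) b = ∑ i ∈ s, riemannLiouville α (F i) b := by
  simp only [riemannLiouville, mul_sum,
    integral_finsetSum fun i hi => intervalIntegrable_rpow_sub_mul hα (hF i hi)]

lemma riemannLiouville_mono (hα : 0 < α) (hb : 0 ≤ b) (hf : ContinuousOn f (uIcc 0 b))
    (hg : ContinuousOn g (uIcc 0 b)) (hfg : ∀ y ∈ Icc 0 b, f y ≤ g y) :
    riemannLiouville α f b ≤ riemannLiouville α g b := by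
  refine mul_le_mul_of_nonneg_left ?_ (inv_nonneg.2 (Gamma_pos_of_pos hα).le)
  refine integral_mono_on hb (intervalIntegrable_rpow_sub_mul hα hf)
    (intervalIntegrable_rpow_sub_mul hα hg) fun y hy => ?_
  exact mul_le_mul_of_nonneg_left (hfg y hy) (rpow_nonneg (by linarith [hy.2]) _)

lemma riemannLiouville_powDivGamma {ν : ℝ} (hα : 0 < α) (hν : 0 ≤ ν) (hb : 0 ≤ b) :
    riemannLiouville α (powDivGamma ν) b = powDivGamma (ν + α) b := by
  rw [riemannLiouville, integral_rpow_sub_mul_powDivGamma hα hν hb,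
    inv_mul_cancel_left₀ (Gamma_pos_of_pos hα).ne']

lemma riemannLiouville_const (hα : 0 < α) (hb : 0 ≤ b) (c : ℝ) :
    riemannLiouville α (fun _ => c) b = c * powDivGamma α b := by
  simpa [powDivGamma_zero_left, riemannLiouville_powDivGamma hα le_rfl hb] using
    riemannLiouville_const_mul (α := α) (b := b) (f := powDivGamma 0) c

lemma riemannLiouville_powDivGamma_add_le {s a : ℝ} (hα0 : 0 < α) (hα1 : α ≤ 1) (hs : 0 ≤ s)
    (ha : 0 ≤ a) (hb : 0 ≤ b) :
    riemannLiouville α (fun y => powDivGamma s (a + y)) b ≤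
      powDivGamma (s + α) (a + b) - 2 ^ (α - 1) * powDivGamma (s + α) a +
        (1 - 2 ^ (α - 1)) * powDivGamma s a * powDivGamma α b := by
  have hshift : ∫ y in 0..b, (b - y) ^ (α - 1) * powDivGamma s (a + y) =
      (∫ z in 0..a + b, (a + b - z) ^ (α - 1) * powDivGamma s z) -
        ∫ z in 0..a, (a + b - z) ^ (α - 1) * powDivGamma s z := by
    have hcont {t : ℝ} := (continuous_powDivGamma hs).continuousOn (s := uIcc 0 t)
    rw [integral_interval_sub_left (intervalIntegrable_rpow_sub_mul hα0 hcont)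
      (intervalIntegrable_rpow_sub_mul hα0 hcont)]
    simpa only [add_zero, add_sub_add_left_eq_sub] using
      integral_comp_add_left (fun z => (a + b - z) ^ (α - 1) * powDivGamma s z) a (a := 0) (b := b)
  have hcompare := two_rpow_sub_one_mul_integral_le hα0 hα1 ha hb
    (continuous_powDivGamma hs).continuousOn (fun z hz => powDivGamma_nonneg hs hz.1)
    (fun z hz => powDivGamma_le_powDivGamma hs hz.1 hz.2)
  have hΓ := Gamma_pos_of_pos hα0
  rw [integral_rpow_sub_mul_powDivGamma hα0 hs ha] at hcompare
  have hbα : b ^ α / α = Gamma α * powDivGamma α b := by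
    rw [powDivGamma, Gamma_add_one hα0.ne']
    field_simp
  rw [riemannLiouville, hshift, integral_rpow_sub_mul_powDivGamma hα0 hs (by linarith),
    inv_mul_le_iff₀ hΓ]
  rw [mul_div_assoc, hbα] at hcompare
  linarith

end riemannLiouville

noncomputable def binomialSum (α : ℝ) (k : ℕ) (a b : ℝ) : ℝ :=
  ∑ j ∈ range (k + 1), powDivGamma (j * α) a * powDivGamma ((k - j) * α) b

section binomialSum

variable {α : ℝ} {k : ℕ} {a b : ℝ}

lemma cast_sub_mul_nonneg_of_mem_range {j : ℕ} (hj : j ∈ range (k + 1)) (hα : 0 ≤ α) :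
    0 ≤ ((k : ℝ) - j) * α :=
  mul_nonneg (sub_nonneg.2 (by exact_mod_cast Nat.lt_succ_iff.1 (mem_range.1 hj))) hα

lemma continuous_binomialSum (hα : 0 ≤ α) (k : ℕ) (a : ℝ) : Continuous (binomialSum α k a) :=
  continuous_finsetSum _ fun _ hj =>
    continuous_const.mul (continuous_powDivGamma (cast_sub_mul_nonneg_of_mem_range hj hα))

lemma binomialSum_one (α a b : ℝ) : binomialSum α 1 a b = powDivGamma α a + powDivGamma α b := by
  simp [binomialSum, sum_range_succ, powDivGamma_zero_left, add_comm]

lemma binomialSum_succ (hα : 0 < α) (k : ℕ) (a : ℝ) (hb : 0 ≤ b) :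
    binomialSum α (k + 1) a b =
      powDivGamma ((k + 1) * α) a + riemannLiouville α (binomialSum α k a) b := by
  have hexp {j : ℕ} (hj : j ∈ range (k + 1)) := cast_sub_mul_nonneg_of_mem_range hj hα.le
  unfold binomialSum
  rw [riemannLiouville_sum _ hα fun j hj =>
      ((continuous_powDivGamma (hexp hj)).const_mul _).continuousOn,
    sum_range_succ _ (k + 1)]
  push_cast
  rw [sub_self, zero_mul, powDivGamma_zero_left, mul_one, add_comm]
  refine congrArg _ (sum_congr rfl fun j hj => ?_)
  rw [riemannLiouville_const_mul, riemannLiouville_powDivGamma hα (hexp hj) hb]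
  ring_nf

lemma binomialSum_one_add_le (hα0 : 0 < α) (hα1 : α ≤ 1) (ha : 0 ≤ a) (hb : 0 ≤ b) :
    α ^ 2 * binomialSum α 1 a b + (2 ^ (α - 1) - α ^ 2) * (powDivGamma α a + powDivGamma α b) ≤
      powDivGamma α (a + b) := by
  rw [binomialSum_one]
  calc _ = 2 ^ (α - 1) * (a ^ α + b ^ α) / Gamma (α + 1) := by simp only [powDivGamma]; ring
    _ ≤ _ := div_le_div_of_nonneg_right (two_rpow_sub_one_mul_add_le hα0.le hα1 ha hb)
      (Gamma_pos_of_pos (by linarith)).le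

lemma binomialSum_succ_add_le (hα0 : 0 < α) (hα1 : α ≤ 1) (ha : 0 ≤ a) (hb : 0 ≤ b)
    (ih : ∀ y ∈ Icc 0 b, α ^ 2 * binomialSum α k a y +
      (2 ^ (α - 1) - α ^ 2) * (powDivGamma (k * α) a + powDivGamma (k * α) y) ≤
        powDivGamma (k * α) (a + y)) :
    α ^ 2 * binomialSum α (k + 1) a b +
        (2 ^ (α - 1) - α ^ 2) * (powDivGamma ((k + 1) * α) a + powDivGamma ((k + 1) * α) b) ≤
      powDivGamma ((k + 1) * α) (a + b) := by
  set s : ℝ := k * α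
  have hs : 0 ≤ s := by positivity
  have hph := continuous_powDivGamma hs
  set N : ℝ → ℝ := fun y => powDivGamma s (a + y) -
    (2 ^ (α - 1) - α ^ 2) * powDivGamma s a - (2 ^ (α - 1) - α ^ 2) * powDivGamma s y
  have hR : α ^ 2 * riemannLiouville α (binomialSum α k a) b ≤ riemannLiouville α N b := by
    rw [← riemannLiouville_const_mul]
    refine riemannLiouville_mono hα0 hb
      ((continuous_binomialSum hα0.le k a).const_mul _).continuousOn (by fun_prop) fun y hy => ?_
    linarith [ih y hy]
  have hN : riemannLiouville α N b =
      riemannLiouville α (fun y => powDivGamma s (a + y)) b -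
        (2 ^ (α - 1) - α ^ 2) * powDivGamma s a * powDivGamma α b -
        (2 ^ (α - 1) - α ^ 2) * powDivGamma (s + α) b := by
    rw [riemannLiouville_sub hα0 (by fun_prop) (by fun_prop),
      riemannLiouville_sub hα0 (by fun_prop) (by fun_prop), riemannLiouville_const hα0 hb,
      riemannLiouville_const_mul, riemannLiouville_powDivGamma hα0 hs hb]
  have hQ := riemannLiouville_powDivGamma_add_le hα0 hα1 hs ha hb
  have hcross : powDivGamma s a * powDivGamma α b * (1 + α ^ 2 - 2 * 2 ^ (α - 1)) ≤ 0 := by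
    refine mul_nonpos_of_nonneg_of_nonpos
      (mul_nonneg (powDivGamma_nonneg hs ha) (powDivGamma_nonneg hα0.le hb)) ?_
    have := one_add_sq_le_two_rpow hα0.le hα1
    rw [rpow_sub two_pos, rpow_one]
    linarith
  rw [binomialSum_succ hα0 k a hb, show ((k : ℝ) + 1) * α = s + α by ring]
  linarith

theorem binomialSum_add_le (hα0 : 0 < α) (hα1 : α ≤ 1) (hk : 1 ≤ k) (ha : 0 ≤ a) (hb : 0 ≤ b) :
    α ^ 2 * binomialSum α k a b +
        (2 ^ (α - 1) - α ^ 2) * (powDivGamma (k * α) a + powDivGamma (k * α) b) ≤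
      powDivGamma (k * α) (a + b) := by
  induction k, hk using Nat.le_induction generalizing b with
  | base => simpa using binomialSum_one_add_le hα0 hα1 ha hb
  | succ k _ ih =>
    push_cast
    exact binomialSum_succ_add_le hα0 hα1 ha hb fun y hy => ih hy.1

theorem binomialSum_le (hα0 : 0 < α) (hα1 : α ≤ 1) (hk : 1 ≤ k) (ha : 0 ≤ a) (hb : 0 ≤ b) :
    binomialSum α k a b ≤ powDivGamma (k * α) (a + b) / α ^ 2 := by
  have hexp : 0 ≤ (k : ℝ) * α := by positivity
  have hslack := mul_nonneg (sub_nonneg.2 (sq_le_two_rpow_sub_one hα0.le hα1))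
    (add_nonneg (powDivGamma_nonneg hexp ha) (powDivGamma_nonneg hexp hb))
  rw [le_div_iff₀ (by positivity), mul_comm]
  linarith [binomialSum_add_le hα0 hα1 hk ha hb]

end binomialSum

end NeoClassical

open NeoClassical in
theorem neoclassical_inequality (p : ℝ) (hp : 1 ≤ p) (a b : ℝ)
    (ha : 0 ≤ a) (hb : 0 ≤ b) (k : ℕ) (hk : 1 ≤ k) :
    ∑ j ∈ Finset.range (k + 1),
        a ^ ((j : ℝ) / p) * b ^ (((k : ℝ) - (j : ℝ)) / p) /
          (Real.Gamma ((j : ℝ) / p + 1) * Real.Gamma (((k : ℝ) - (j : ℝ)) / p + 1)) ≤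
      p ^ 2 * (a + b) ^ ((k : ℝ) / p) / Real.Gamma ((k : ℝ) / p + 1) := by
  have hp0 : 0 < p := by linarith
  calc _ = binomialSum p⁻¹ k a b := by
        simp only [binomialSum, powDivGamma, div_mul_div_comm, ← div_eq_mul_inv]
    _ ≤ powDivGamma (k * p⁻¹) (a + b) / p⁻¹ ^ 2 :=
        binomialSum_le (inv_pos.2 hp0) (inv_le_one_of_one_le₀ hp) hk ha hb
    _ = _ := by
        rw [powDivGamma, inv_pow, div_inv_eq_mul, ← div_eq_mul_inv]
        ring
end

section
/- Let (S_P) denote the Riemann-type sums S_P = Σ over partitions P of [s,t], where removing a single well-chosen point t_l from a partition with L ≥ 3 subintervals changes the value by at most D (2/(L−1))^{k/p} for a constant D and fixed k/p > 1. Then for any partition P with L subintervals, ‖S_P − S_{trivial}‖ ≤ D Σ_{m=3}^{L} (2/(m−1))^{k/p} ≤ D(1 + Σ_{m=3}^∞ (2/(m−1))^{k/p}) < ∞, where S_trivial is the sum over the trivial partition {s,t}. -/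
open Real Finset

/-! Removing suitable interior points one at a time leads from `P` down to `{s, t}`; by the
triangle inequality the total change is at most the sum of the costs of the single removals,
`D (2/(L-1))^{k/p}` for a partition into `L` intervals, and this series converges since
`k/p > 1`. -/

section Telescoping

variable {α E : Type*} [DecidableEq α] [SeminormedAddCommGroup E]

theorem norm_sub_le_sum_Ioc_card_of_exists_erase (S : Finset α → E) (B : Finset α) (g : ℕ → ℝ)
    (hdrop : ∀ P, B ⊂ P → ∃ x ∈ P \ B, ‖S P - S (P.erase x)‖ ≤ g #P) :
    ∀ P, B ⊆ P → ‖S P - S B‖ ≤ ∑ n ∈ Ioc #B #P, g n := by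
  intro P
  induction P using Finset.strongInduction with
  | H P ih =>
  intro hBP
  obtain rfl | hBP := hBP.eq_or_ssubset
  · simp
  obtain ⟨x, hx, hx_drop⟩ := hdrop P hBP
  obtain ⟨hxP, hxB⟩ := mem_sdiff.1 hx
  have hB : B ⊆ P.erase x := subset_erase.2 ⟨hBP.subset, hxB⟩
  calc ‖S P - S B‖ ≤ ‖S P - S (P.erase x)‖ + ‖S (P.erase x) - S B‖ :=
        norm_sub_le_norm_sub_add_norm_sub _ _ _
    _ ≤ g #P + ∑ n ∈ Ioc #B #(P.erase x), g n :=
        add_le_add hx_drop (ih _ (erase_ssubset hxP) hB)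
    _ = ∑ n ∈ Ioc #B #P, g n := by
        rw [← card_erase_add_one hxP, sum_Ioc_succ_top (card_le_card hB), add_comm]

end Telescoping

theorem summable_two_div_nat_add_two_rpow {r : ℝ} (hr : 1 < r) :
    Summable fun m : ℕ => (2 / ((m : ℝ) + 2)) ^ r := by
  refine (((summable_one_div_nat_add_rpow 2 r).2 hr).mul_left (2 ^ r)).congr fun m => ?_
  have hm : (0 : ℝ) < m + 2 := by positivity
  rw [abs_of_pos hm, div_rpow zero_le_two hm.le, mul_one_div]

theorem sum_Ioc_three_two_div_sub_two_rpow_le_tsum {r : ℝ} (hr : 1 < r) (N : ℕ) :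
    ∑ n ∈ Ioc 3 N, (2 / ((n : ℝ) - 2)) ^ r ≤ ∑' m : ℕ, (2 / ((m : ℝ) + 2)) ^ r := by
  rw [← Ico_add_one_add_one_eq_Ioc, sum_Ico_eq_sum_range]
  have hshift : ∀ m : ℕ, (((3 + 1 + m : ℕ) : ℝ) - 2) = m + 2 := fun m => by push_cast; ring
  simp only [hshift]
  exact (summable_two_div_nat_add_two_rpow hr).sum_le_tsum _ fun m _ => by positivity

/-- `n` counts the points of a partition, so it has `n - 1` subintervals. -/
noncomputable def dropCost (D r : ℝ) (n : ℕ) : ℝ :=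
  if n ≤ 3 then D else D * (2 / ((n : ℝ) - 2)) ^ r

theorem sum_Ioc_two_dropCost_le {D r : ℝ} (hD : 0 ≤ D) (hr : 1 < r) (N : ℕ) :
    ∑ n ∈ Ioc 2 N, dropCost D r n ≤ D * (1 + ∑' m : ℕ, (2 / ((m : ℝ) + 2)) ^ r) := by
  have hT : 0 ≤ ∑' m : ℕ, (2 / ((m : ℝ) + 2)) ^ r := tsum_nonneg fun m => by positivity
  obtain hN | hN := le_or_gt N 2
  · rw [Ioc_eq_empty (by omega), sum_empty]
    positivity
  have htail : ∑ n ∈ Ioc 3 N, dropCost D r n = D * ∑ n ∈ Ioc 3 N, (2 / ((n : ℝ) - 2)) ^ r := by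
    rw [mul_sum]
    exact sum_congr rfl fun n hn => if_neg (by simp only [mem_Ioc] at hn; omega)
  rw [← sum_Ioc_consecutive _ (by norm_num : 2 ≤ 3) hN, Nat.Ioc_succ_singleton, sum_singleton,
    htail, mul_one_add]
  gcongr
  · simp [dropCost]
  · exact sum_Ioc_three_two_div_sub_two_rpow_le_tsum hr N

/-- Telescoping bound over partition sums: if removing a well-chosen interior point
from any partition with `L ≥ 3` subintervals changes the value of `S` by at most
`D (2/(L−1))^{k/p}` (and by at most `D` when `L = 2`), then every partition value is
within `D (1 + Σ_{m=3}^∞ (2/(m−1))^{k/p})` of the value at the trivial partition. -/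
theorem telescoping_partition_bound {E : Type*} [NormedAddCommGroup E]
    (k p D : ℝ) (hkp : 1 < k / p) (hD : 0 < D)
    (s t : ℝ) (hst : s < t)
    (S : Finset ℝ → E)
    (hdrop3 : ∀ P : Finset ℝ, s ∈ P → t ∈ P → 4 ≤ P.card →
      ∃ x ∈ P, x ≠ s ∧ x ≠ t ∧
        ‖S P - S (P.erase x)‖ ≤ D * (2 / ((P.card : ℝ) - 2)) ^ (k / p))
    (hdrop2 : ∀ P : Finset ℝ, s ∈ P → t ∈ P → P.card = 3 →
      ∃ x ∈ P, x ≠ s ∧ x ≠ t ∧ ‖S P - S (P.erase x)‖ ≤ D) :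
    ∀ P : Finset ℝ, s ∈ P → t ∈ P →
      ‖S P - S {s, t}‖ ≤ D * (1 + ∑' m : ℕ, (2 / ((m : ℝ) + 2)) ^ (k / p)) := by
  have hdrop : ∀ P, {s, t} ⊂ P →
      ∃ x ∈ P \ {s, t}, ‖S P - S (P.erase x)‖ ≤ dropCost D (k / p) #P := by
    intro P hP
    have hs : s ∈ P := hP.subset (mem_insert_self s {t})
    have ht : t ∈ P := hP.subset (mem_insert_of_mem (mem_singleton_self t))
    have hcard : 2 < #P := by simpa [card_pair hst.ne] using card_lt_card hP
    obtain ⟨x, hxP, hxs, hxt, hx⟩ :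
        ∃ x ∈ P, x ≠ s ∧ x ≠ t ∧ ‖S P - S (P.erase x)‖ ≤ dropCost D (k / p) #P := by
      obtain h3 | h4 : #P = 3 ∨ 4 ≤ #P := by omega
      · simpa [dropCost, h3] using hdrop2 P hs ht h3
      · simpa [dropCost, show ¬#P ≤ 3 by omega] using hdrop3 P hs ht h4
    exact ⟨x, by simp [hxP, hxs, hxt], hx⟩
  intro P hs ht
  calc ‖S P - S {s, t}‖ ≤ ∑ n ∈ Ioc #{s, t} #P, dropCost D (k / p) n :=
        norm_sub_le_sum_Ioc_card_of_exists_erase S _ _ hdrop P (insert_subset hs (by simpa))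
    _ ≤ _ := card_pair hst.ne ▸ sum_Ioc_two_dropCost_le hD.le hkp #P
end
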